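/- Let β > 0 and 0 < c < 1 be real, n a natural number, and x a complex number. Then the Meixner polynomial satisfies the identity (β)_n · c^n · M_n(x;β,c) = ∑_{k=0}^n [(1)_n/(1)_k] · (x+β)_k · (−x)_{n−k} · c^k/(n−k)!. -/

import Mathlib

/-!
Multiplying out, `(β)_n cⁿ M_n(x;β,c) = ∑_j C(n,j) (−x)_j (β+j)_{n−j} c^{n−j} (1−c)^j`.
Splitting `β + j = (x + β) + (−x + j)` in the rising-factorial Chu–Vandermonde identity expands
`(β+j)_{n−j}`; after exchanging the two sums, the inner sum over `j` is the binomial expansion of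
`c^k (c + (1 − c))^{n−k} = c^k`, which leaves the right-hand side.
-/

open Filter Topology Finset

/-- The Pochhammer symbol (rising factorial) `(u)_k = u (u+1) ⋯ (u+k-1)`, with `(u)_0 = 1`. -/
noncomputable def poch (u : ℂ) (k : ℕ) : ℂ := ∏ i ∈ range k, (u + i)

/-- The Meixner polynomial
`M_n(x; β, c) = ∑_{j=0}^n (−n)_j (−x)_j / ((β)_j j!) · (1 − 1/c)^j`. -/
noncomputable def meixner (β c : ℝ) (n : ℕ) (x : ℂ) : ℂ :=
  ∑ j ∈ range (n + 1),
    poch (-(n : ℂ)) j * poch (-x) j / (poch (β : ℂ) j * (j.factorial : ℂ)) *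
      (1 - 1 / (c : ℂ)) ^ j

lemma poch_add (u : ℂ) (m l : ℕ) : poch u (m + l) = poch u m * poch (u + m) l := by
  simp only [poch, prod_range_add, Nat.cast_add, add_assoc]

lemma poch_one (n : ℕ) : poch 1 n = n.factorial := by
  simp [poch, ← prod_range_add_one_eq_factorial, add_comm]

lemma poch_neg_natCast (n j : ℕ) :
    poch (-n) j = (-1) ^ j * j.factorial * n.choose j := by
  have h := descPochhammer_eval_eq_descFactorial ℂ n j
  rw [descPochhammer_eval_eq_prod_range, Nat.descFactorial_eq_factorial_mul_choose] at h
  simp only [poch, neg_add_eq_sub, ← neg_sub (n : ℂ), prod_neg, card_range, h]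
  push_cast
  ring

lemma poch_ne_zero_of_re_pos {u : ℂ} (hu : 0 < u.re) (k : ℕ) : poch u k ≠ 0 :=
  prod_ne_zero_iff.mpr fun i _ h => by
    have := congrArg Complex.re h
    simp only [Complex.add_re, Complex.natCast_re, Complex.zero_re] at this
    linarith [i.cast_nonneg (α := ℝ)]

lemma descPochhammer_eval_neg (a : ℂ) (k : ℕ) :
    (descPochhammer ℂ k).eval (-a) = (-1) ^ k * poch a k := by
  simp only [descPochhammer_eval_eq_prod_range, poch, ← neg_add', prod_neg, card_range]

lemma descPochhammer_smeval_eq_eval {R : Type*} [Ring R] (k : ℕ) (r : R) :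
    (descPochhammer ℤ k).smeval r = (descPochhammer R k).eval r := by
  rw [← Polynomial.aeval_eq_smeval, Polynomial.aeval_def, ← Polynomial.eval_map,
    descPochhammer_map]

-- The falling-factorial Chu–Vandermonde identity at `-a`, `-b`: the signs `(-1)^k (-1)^(m-k)` cancel `(-1)^m`.
lemma poch_add_eq_sum (a b : ℂ) (m : ℕ) :
    poch (a + b) m = ∑ k ∈ range (m + 1), m.choose k * poch a k * poch b (m - k) := by
  have h := Ring.descPochhammer_smeval_add (r := -a) (s := -b) m (Commute.all _ _)
  simp only [descPochhammer_smeval_eq_eval, ← neg_add, descPochhammer_eval_neg,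
    Nat.sum_antidiagonal_eq_sum_range_succ_mk] at h
  have hsign : ∀ k ∈ range (m + 1),
      (m.choose k : ℂ) * ((-1) ^ k * poch a k * ((-1) ^ (m - k) * poch b (m - k))) =
        (-1) ^ m * (m.choose k * poch a k * poch b (m - k)) := fun k hk => by
    rw [← pow_sub_mul_pow (-1 : ℂ) (Nat.le_of_lt_succ (mem_range.mp hk))]; ring
  rw [sum_congr rfl hsign, ← mul_sum] at h
  exact mul_left_cancel₀ (pow_ne_zero _ (neg_ne_zero.mpr one_ne_zero)) h

lemma choose_mul_choose_sub_comm (n j k : ℕ) :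
    n.choose j * (n - j).choose k = n.choose k * (n - k).choose j := by
  have hj := Nat.choose_mul (n := n) (Nat.le_add_right j k)
  have hk := Nat.choose_mul (n := n) (Nat.le_add_left k j)
  rw [Nat.add_sub_cancel_left] at hj
  rw [Nat.add_sub_cancel, ← Nat.choose_symm_add] at hk
  rw [← hj, ← hk]

lemma sum_choose_mul_pow_mul_one_sub_pow (c : ℂ) {k n : ℕ} (h : k ≤ n) :
    ∑ j ∈ range (n - k + 1), ((n - k).choose j : ℂ) * c ^ (n - j) * (1 - c) ^ j = c ^ k := by
  have hbinom := add_pow (1 - c) c (n - k)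
  rw [sub_add_cancel, one_pow] at hbinom
  calc _ = c ^ k * ∑ j ∈ range (n - k + 1),
          (1 - c) ^ j * c ^ (n - k - j) * ((n - k).choose j : ℂ) := by
        rw [mul_sum]
        refine sum_congr rfl fun j hj => ?_
        rw [show n - j = k + (n - k - j) by have := mem_range.mp hj; omega, pow_add]
        ring
    _ = c ^ k := by rw [← hbinom, mul_one]

lemma sum_choose_poch_mul_poch_mul_pow_eq (a b c : ℂ) (n : ℕ) :
    ∑ j ∈ range (n + 1),
        n.choose j * poch b j * poch (a + b + j) (n - j) * c ^ (n - j) * (1 - c) ^ j =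
      ∑ k ∈ range (n + 1), n.choose k * poch a k * poch b (n - k) * c ^ k := by
  have hterm : ∀ j ∈ range (n + 1), ∀ k ∈ range (n - j + 1),
      (n.choose j : ℂ) * poch b j * ((n - j).choose k * poch a k * poch (b + j) (n - j - k)) *
          c ^ (n - j) * (1 - c) ^ j =
        n.choose k * poch a k * poch b (n - k) *
          ((n - k).choose j * c ^ (n - j) * (1 - c) ^ j) := by
    intro j hj k hk
    have hchoose : (n.choose j * (n - j).choose k : ℂ) = n.choose k * (n - k).choose j := by
      exact_mod_cast choose_mul_choose_sub_comm n j k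
    have hpoch : poch b j * poch (b + j) (n - j - k) = poch b (n - k) := by
      rw [← poch_add]; congr 1; simp only [mem_range] at hj hk; omega
    linear_combination
      (poch a k * c ^ (n - j) * (1 - c) ^ j) * (poch b j * poch (b + j) (n - j - k)) * hchoose +
        (poch a k * c ^ (n - j) * (1 - c) ^ j * (n.choose k * (n - k).choose j)) * hpoch
  calc _ = ∑ j ∈ range (n + 1), ∑ k ∈ range (n - j + 1),
        (n.choose j : ℂ) * poch b j * ((n - j).choose k * poch a k * poch (b + j) (n - j - k)) *
          c ^ (n - j) * (1 - c) ^ j := by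
        refine sum_congr rfl fun j _ => ?_
        rw [add_assoc, poch_add_eq_sum, mul_sum, sum_mul, sum_mul]
    _ = ∑ k ∈ range (n + 1), ∑ j ∈ range (n - k + 1),
        n.choose k * poch a k * poch b (n - k) *
          ((n - k).choose j * c ^ (n - j) * (1 - c) ^ j) := by
        rw [sum_congr rfl fun j hj => sum_congr rfl (hterm j hj)]
        exact sum_comm' fun j k => by simp only [mem_range]; omega
    _ = _ := by
        refine sum_congr rfl fun k hk => ?_
        rw [← mul_sum, sum_choose_mul_pow_mul_one_sub_pow c (Nat.le_of_lt_succ (mem_range.mp hk))]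

lemma poch_mul_pow_mul_meixner {β c : ℝ} (hβ : 0 < β) (hc : c ≠ 0) (n : ℕ) (x : ℂ) :
    poch β n * c ^ n * meixner β c n x =
      ∑ j ∈ range (n + 1),
        n.choose j * poch (-x) j * poch (β + j) (n - j) * c ^ (n - j) * (1 - c) ^ j := by
  rw [meixner, mul_sum]
  refine sum_congr rfl fun j hj => ?_
  have hjn : j ≤ n := Nat.le_of_lt_succ (mem_range.mp hj)
  have hβj := poch_ne_zero_of_re_pos (u := β) (by simpa using hβ) j
  have hfac : (j.factorial : ℂ) ≠ 0 := by exact_mod_cast j.factorial_ne_zero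
  have hc' : (c : ℂ) ≠ 0 := by exact_mod_cast hc
  have hpoch : poch β n = poch β j * poch (β + j) (n - j) := by
    rw [← poch_add, Nat.add_sub_cancel' hjn]
  have hpow : (-1 : ℂ) ^ j * (c ^ n * (1 - 1 / c) ^ j) = c ^ (n - j) * (1 - c) ^ j := by
    have hc1 : -1 * (c * (1 - 1 / c)) = 1 - (c : ℂ) := by field_simp; ring
    rw [← Nat.sub_add_cancel hjn, pow_add, Nat.add_sub_cancel, ← hc1, mul_pow, mul_pow]
    ring
  generalize (1 - 1 / (c : ℂ)) = w at hpow ⊢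
  rw [poch_neg_natCast, hpoch]
  field_simp
  linear_combination (poch (β + j) (n - j) * n.choose j * poch (-x) j) * hpow

theorem meixner_identity_general (β c : ℝ) (hβ : 0 < β) (hc0 : 0 < c)
    (n : ℕ) (x : ℂ) :
    poch (β : ℂ) n * (c : ℂ) ^ n * meixner β c n x =
      ∑ k ∈ range (n + 1),
        poch 1 n / poch 1 k * poch (x + (β : ℂ)) k * poch (-x) (n - k) *
          (c : ℂ) ^ k / ((n - k).factorial : ℂ) := by
  have hexpand := sum_choose_poch_mul_poch_mul_pow_eq (x + β) (-x) c n
  rw [add_neg_cancel_comm] at hexpand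
  rw [poch_mul_pow_mul_meixner hβ hc0.ne', hexpand]
  refine sum_congr rfl fun k hk => ?_
  have hchoose : (n.choose k : ℂ) = n.factorial / k.factorial / (n - k).factorial := by
    rw [Nat.cast_choose ℂ (Nat.le_of_lt_succ (mem_range.mp hk)), div_div]
  rw [poch_one, poch_one, hchoose]
  ring

/-- For `β > 0`, `0 < c < 1`, every `n : ℕ` and every complex `x`,
`(β)_n cⁿ M_n(x;β,c) = ∑_{k=0}^n (1)_n/(1)_k · (x+β)_k (−x)_{n−k} c^k / (n−k)!`. -/
theorem meixner_identity (β c : ℝ) (hβ : 0 < β) (hc0 : 0 < c) (hc1 : c < 1)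
    (n : ℕ) (x : ℂ) :
    poch (β : ℂ) n * (c : ℂ) ^ n * meixner β c n x =
      ∑ k ∈ range (n + 1),
        poch 1 n / poch 1 k * poch (x + (β : ℂ)) k * poch (-x) (n - k) *
          (c : ℂ) ^ k / ((n - k).factorial : ℂ) :=
  meixner_identity_general β c hβ hc0 n x
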